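/- arXiv:2006.07705 — 4 statements merged into one kernel-verified Lean document; each statement's English description precedes it below -/
import Mathlib

section
/- For every positive integer n, the number of partitions of n with non-negative rank satisfies N(n) ≤ p(n-1), where the rank of a partition is its largest part minus its number of parts. -/
open PowerSeries Finset

noncomputable instance : TopologicalSpace (PowerSeries ℚ) :=
  inferInstanceAs (TopologicalSpace ((Unit →₀ ℕ) → ℚ))

/-- The rank of a partition: largest part minus number of parts. -/
def rank {n : ℕ} (P : n.Partition) : ℤ :=
  (P.parts.sup : ℤ) - (Multiset.card P.parts : ℤ)

/-- The crank of a partition. -/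
def crank {n : ℕ} (P : n.Partition) : ℤ :=
  if P.parts.count 1 = 0 then (P.parts.sup : ℤ)
  else ((P.parts.filter (fun x => P.parts.count 1 < x)).card : ℤ) - (P.parts.count 1 : ℤ)

/-- The number of partitions of `n`. -/
noncomputable def p (n : ℕ) : ℕ := Nat.card n.Partition

/-- `p` extended to the integers by `0` on negatives. -/
noncomputable def pz (m : ℤ) : ℕ := if 0 ≤ m then p m.toNat else 0

/-- The number of partitions of `n` with non-negative rank. -/
noncomputable def Nrank (n : ℕ) : ℕ := Nat.card {P : n.Partition // 0 ≤ rank P}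

/-- The number of partitions of `n` with positive rank. -/
noncomputable def Rrank (n : ℕ) : ℕ := Nat.card {P : n.Partition // 0 < rank P}

/-- The number of Garden of Eden partitions of `n` (rank at most `-2`). -/
noncomputable def gePart (n : ℕ) : ℕ := Nat.card {P : n.Partition // rank P ≤ -2}

/-- The number of partitions of `n` with non-negative crank. -/
noncomputable def Ccrank (n : ℕ) : ℕ := Nat.card {P : n.Partition // 0 ≤ crank P}

/-- The number of partitions of `n` with positive crank. -/
noncomputable def Dcrank (n : ℕ) : ℕ := Nat.card {P : n.Partition // 0 < crank P}

/-- The number of partitions of `n` in which `k` is the least positive integer that is not a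
part and there are more parts greater than `k` than parts less than `k`. -/
noncomputable def Mk (k n : ℕ) : ℕ := Nat.card {P : n.Partition //
  (∀ i, 1 ≤ i → i < k → (i : ℕ) ∈ P.parts) ∧ (k : ℕ) ∉ P.parts ∧
  (P.parts.filter (fun x => x < k)).card < (P.parts.filter (fun x => k < x)).card}

/-- The number of partitions of `n` with no part divisible by 3. -/
noncomputable def p3 (n : ℕ) : ℕ := Nat.card {P : n.Partition // ∀ x ∈ P.parts, ¬ (3 ∣ x)}

/-- The infinite product `(q;q)_∞` as a formal power series. -/
noncomputable def E : PowerSeries ℚ := ∏' i : ℕ, (1 - (X : PowerSeries ℚ) ^ (i + 1))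

/-- The finite product `(q;q)_n` as a formal power series. -/
noncomputable def qPoch (n : ℕ) : PowerSeries ℚ :=
  ∏ i ∈ range n, (1 - (X : PowerSeries ℚ) ^ (i + 1))

/-! Remove the largest part `a` of a partition of `n` with `k ≤ a` parts, add one to each of the
other `k - 1` parts and add `a - k` parts equal to one: the result is a partition of `n - 1`.
It has `a - 1` parts, which recovers `a`, and subtracting one from every part and discarding the
zeros recovers the other parts, so this map is injective. -/

theorem Multiset.sup_mem_of_ne_zero {α : Type*} [LinearOrder α] [OrderBot α] {s : Multiset α}
    (hs : s ≠ 0) : s.sup ∈ s := by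
  induction s using Multiset.induction with
  | empty => exact absurd rfl hs
  | cons a t ih =>
    rcases eq_or_ne t 0 with rfl | ht
    · simp
    · rw [Multiset.sup_cons]
      rcases max_choice a t.sup with h | h <;> simp [h, ih ht]

namespace Multiset

def eraseBumpPad (s : Multiset ℕ) (a : ℕ) : Multiset ℕ :=
  (s.erase a).map (· + 1) + replicate (a - card s) 1

variable {s : Multiset ℕ} {a : ℕ}

theorem pos_of_mem_eraseBumpPad {x : ℕ} (hx : x ∈ eraseBumpPad s a) : 0 < x := by
  rcases mem_add.1 hx with hx | hx
  · obtain ⟨y, -, rfl⟩ := mem_map.1 hx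
    exact y.succ_pos
  · rw [eq_of_mem_replicate hx]
    exact one_pos

theorem sum_eraseBumpPad_add_one (ha : a ∈ s) (hcard : card s ≤ a) :
    (eraseBumpPad s a).sum + 1 = s.sum := by
  have hpos : 0 < card s := card_pos_iff_exists_mem.2 ⟨a, ha⟩
  rw [eraseBumpPad, sum_add, sum_map_add, map_id', map_const', sum_replicate, sum_replicate,
    card_erase_of_mem ha, Nat.pred_eq_sub_one, ← sum_erase ha, smul_eq_mul, smul_eq_mul]
  omega

theorem card_eraseBumpPad (ha : a ∈ s) (hcard : card s ≤ a) :
    card (eraseBumpPad s a) = a - 1 := by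
  have hpos : 0 < card s := card_pos_iff_exists_mem.2 ⟨a, ha⟩
  rw [eraseBumpPad, card_add, card_map, card_replicate, card_erase_of_mem ha, Nat.pred_eq_sub_one]
  omega

theorem filter_pos_map_pred_eraseBumpPad (hs : ∀ x ∈ s, 0 < x) :
    ((eraseBumpPad s a).map (· - 1)).filter (0 < ·) = s.erase a := by
  rw [eraseBumpPad, map_add, filter_add, map_map, map_replicate]
  have hzero : (replicate (a - card s) (1 - 1)).filter (0 < ·) = 0 :=
    filter_eq_nil.2 fun x hx => by simp [eq_of_mem_replicate hx]
  rw [hzero, add_zero, filter_eq_self.2]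
  · simp
  · simp only [mem_map, Function.comp_apply]
    rintro _ ⟨x, hx, rfl⟩
    simpa using hs x (mem_of_mem_erase hx)

theorem eraseBumpPad_sup_injOn :
    {s : Multiset ℕ | s ≠ 0 ∧ (∀ x ∈ s, 0 < x) ∧ card s ≤ s.sup}.InjOn
      fun s => eraseBumpPad s s.sup := by
  rintro s ⟨hs0, hspos, hscard⟩ t ⟨ht0, htpos, htcard⟩
    (h : eraseBumpPad s s.sup = eraseBumpPad t t.sup)
  have hsmem := sup_mem_of_ne_zero hs0
  have htmem := sup_mem_of_ne_zero ht0
  have hsup : s.sup = t.sup := by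
    have hcard := congrArg card h
    rw [card_eraseBumpPad hsmem hscard, card_eraseBumpPad htmem htcard] at hcard
    have := hspos _ hsmem
    have := htpos _ htmem
    omega
  have herase : s.erase s.sup = t.erase t.sup := by
    rw [← filter_pos_map_pred_eraseBumpPad hspos, h, filter_pos_map_pred_eraseBumpPad htpos]
  rw [← cons_erase hsmem, ← cons_erase htmem, herase, hsup]

end Multiset

theorem Nat.Partition.parts_ne_zero_of_pos {n : ℕ} (hn : 0 < n) (P : n.Partition) :
    P.parts ≠ 0 := by
  rintro h
  have hsum := P.parts_sum
  simp [h] at hsum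
  omega

theorem rank_nonneg_iff {n : ℕ} (P : n.Partition) :
    0 ≤ rank P ↔ Multiset.card P.parts ≤ P.parts.sup := by
  rw [rank]
  omega

def nonnegRankEmbedding {n : ℕ} (hn : 0 < n) :
    {P : n.Partition // 0 ≤ rank P} ↪ (n - 1).Partition where
  toFun P :=
    { parts := P.1.parts.eraseBumpPad P.1.parts.sup
      parts_pos := Multiset.pos_of_mem_eraseBumpPad
      parts_sum := by
        have hsum := Multiset.sum_eraseBumpPad_add_one
          (Multiset.sup_mem_of_ne_zero (P.1.parts_ne_zero_of_pos hn)) ((rank_nonneg_iff P.1).1 P.2)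
        rw [P.1.parts_sum] at hsum
        omega }
  inj' P Q h := Subtype.ext <| Nat.Partition.ext <|
    Multiset.eraseBumpPad_sup_injOn
      ⟨P.1.parts_ne_zero_of_pos hn, fun _ => P.1.parts_pos, (rank_nonneg_iff P.1).1 P.2⟩
      ⟨Q.1.parts_ne_zero_of_pos hn, fun _ => Q.1.parts_pos, (rank_nonneg_iff Q.1).1 Q.2⟩
      (congrArg Nat.Partition.parts h)

theorem stmt0 (n : ℕ) (hn : 0 < n) : Nrank n ≤ p (n - 1) :=
  Nat.card_le_card_of_injective _ (nonnegRankEmbedding hn).injective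
end

section
/- For every positive integer n, the number of partitions of n with non-negative rank satisfies N(n) ≥ p(n-1) - p(n-5). -/
open PowerSeries Finset

/-!
Split the partitions of `n - 1` by rank. Adding one to a largest part raises the rank by one, so
it sends those of rank `≥ -1` injectively to partitions of `n` of non-negative rank whose largest
part is unique. A partition of rank `-2` with largest part `L` has `L + 2` parts; replacing `L` by
`L + 1` and conjugating the other `L + 1` parts gives a partition of `n` of non-negative rank whose
largest part `L + 1` is repeated, so the two images are disjoint. Finally, a partition of rank
`≤ -3` has at least four parts, and trading its first column, of length `k`, for a row of length
`k - 4` is an injection into the partitions of `n - 5`. Hence `p (n - 1) ≤ N n + p (n - 5)`.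
-/

theorem Finset.lt_card_filter_range_iff {P : ℕ → Prop} [DecidablePred P] (hP : Antitone P)
    {N j : ℕ} : j < ((range N).filter P).card ↔ j < N ∧ P j := by
  constructor
  · intro hj
    by_contra hPj
    have hsub : (range N).filter P ⊆ range j := by
      intro m hm
      rw [mem_filter, mem_range] at hm
      rw [mem_range]
      by_contra hmj
      exact hPj ⟨by omega, hP (not_lt.1 hmj) hm.2⟩
    have := card_le_card hsub
    rw [card_range] at this
    omega
  · rintro ⟨hjN, hPj⟩
    have hsub : range (j + 1) ⊆ (range N).filter P := by
      intro m hm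
      rw [mem_range] at hm
      exact mem_filter.2 ⟨mem_range.2 (by omega), hP (by omega) hPj⟩
    simpa using card_le_card hsub

namespace Multiset

/-- The length of column `j` of the Young diagram whose rows are the elements of `s`. -/
def colLen (s : Multiset ℕ) (j : ℕ) : ℕ := s.countP (j < ·)

def conjugate (s : Multiset ℕ) : Multiset ℕ := (Multiset.range s.sup).map s.colLen

variable {s t : Multiset ℕ}

theorem colLen_antitone (s : Multiset ℕ) : Antitone s.colLen := by
  intro i j hij
  simpa only [colLen, countP_eq_card_filter] using
    card_le_card (monotone_filter_right s fun _ hx => hij.trans_lt hx)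

theorem colLen_eq_zero_iff {j : ℕ} : s.colLen j = 0 ↔ s.sup ≤ j := by
  simp [colLen, countP_eq_zero, Multiset.sup_le]

theorem colLen_zero (hs : ∀ x ∈ s, 0 < x) : s.colLen 0 = card s :=
  countP_eq_card.2 hs

theorem colLen_cons (a j : ℕ) :
    (a ::ₘ s).colLen j = s.colLen j + if j < a then 1 else 0 :=
  countP_cons _ _ _

theorem colLen_eq_colLen_succ_add_count (s : Multiset ℕ) (j : ℕ) :
    s.colLen j = s.colLen (j + 1) + s.count (j + 1) := by
  induction s using Multiset.induction_on with
  | empty => simp [colLen]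
  | cons a s ih =>
    rw [colLen_cons, colLen_cons, count_cons, ih]
    split_ifs <;> omega

theorem eq_of_colLen_eq (hs : ∀ x ∈ s, 0 < x) (ht : ∀ x ∈ t, 0 < x)
    (h : s.colLen = t.colLen) : s = t := by
  ext a
  cases a with
  | zero =>
    rw [count_eq_zero.2 fun h0 => (hs 0 h0).false, count_eq_zero.2 fun h0 => (ht 0 h0).false]
  | succ j =>
    have hs := colLen_eq_colLen_succ_add_count s j
    have ht := colLen_eq_colLen_succ_add_count t j
    rw [h] at hs
    omega

theorem lt_colLen_conjugate_iff {i j : ℕ} : j < s.conjugate.colLen i ↔ i < s.colLen j := by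
  rw [conjugate, colLen, countP_map]
  change j < ((Finset.range s.sup).filter fun m => i < s.colLen m).card ↔ _
  rw [Finset.lt_card_filter_range_iff fun a b hab h => h.trans_le (s.colLen_antitone hab)]
  refine ⟨And.right, fun h => ⟨?_, h⟩⟩
  by_contra hj
  have := colLen_eq_zero_iff.2 (not_lt.1 hj)
  omega

theorem conjugate_inj (hs : ∀ x ∈ s, 0 < x) (ht : ∀ x ∈ t, 0 < x) :
    s.conjugate = t.conjugate ↔ s = t := by
  refine ⟨fun h => eq_of_colLen_eq hs ht <| funext fun j => eq_of_forall_lt_iff fun i => ?_,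
    congrArg _⟩
  rw [← lt_colLen_conjugate_iff, h, lt_colLen_conjugate_iff]

theorem pos_of_mem_conjugate {x : ℕ} (hx : x ∈ s.conjugate) : 0 < x := by
  obtain ⟨j, hj, rfl⟩ := mem_map.1 hx
  rw [Nat.pos_iff_ne_zero, Ne, colLen_eq_zero_iff, not_le]
  exact mem_range.1 hj

theorem card_conjugate (s : Multiset ℕ) : card s.conjugate = s.sup := by
  simp [conjugate]

theorem sup_conjugate (hs : ∀ x ∈ s, 0 < x) : s.conjugate.sup = card s := by
  refine eq_of_forall_ge_iff fun j => ?_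
  rw [← colLen_eq_zero_iff, ← colLen_zero hs, ← not_lt, ← lt_colLen_conjugate_iff,
    Nat.pos_iff_ne_zero, not_not]

theorem card_mem_conjugate (hs : ∀ x ∈ s, 0 < x) (hs0 : s ≠ 0) : card s ∈ s.conjugate := by
  refine mem_map.2 ⟨0, mem_range.2 (Nat.pos_of_ne_zero fun h => hs0 ?_), colLen_zero hs⟩
  rw [← card_eq_zero, ← colLen_zero hs, colLen_eq_zero_iff, h]

theorem sum_map_colLen_range {N : ℕ} (h : s.sup ≤ N) :
    ((Multiset.range N).map s.colLen).sum = s.sum := by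
  induction s using Multiset.induction_on with
  | empty => simp [show colLen 0 = 0 from funext fun _ => countP_zero _]
  | cons a s ih =>
    rw [sup_cons, _root_.sup_le_iff] at h
    simp only [colLen_cons, sum_map_add, ih h.2, sum_cons]
    change _ + ∑ j ∈ Finset.range N, (if j < a then 1 else 0) = _
    have hfilter : (Finset.range N).filter (· < a) = Finset.range a := by
      ext
      simp only [Finset.mem_filter, Finset.mem_range]
      omega
    simp [Finset.sum_boole, hfilter, add_comm]

theorem sum_conjugate (s : Multiset ℕ) : s.conjugate.sum = s.sum :=
  sum_map_colLen_range le_rfl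

theorem sup_mem_of_ne_zero_s1 {α : Type*} [LinearOrder α] [OrderBot α] {s : Multiset α}
    (hs : s ≠ 0) : s.sup ∈ s := by
  obtain ⟨y, hy, hmax⟩ := exists_max_image id hs
  rwa [le_antisymm (Multiset.sup_le.2 hmax) (le_sup hy)]

theorem cons_erase_sup (hs : s ≠ 0) : s.sup ::ₘ s.erase s.sup = s :=
  cons_erase (sup_mem_of_ne_zero_s1 hs)

theorem sup_add_sum_erase_sup (s : Multiset ℕ) : s.sup + (s.erase s.sup).sum = s.sum := by
  rcases eq_or_ne s 0 with rfl | hs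
  · simp
  · rw [← sum_cons, cons_erase_sup hs]

theorem card_erase_sup (s : Multiset ℕ) : card (s.erase s.sup) = card s - 1 := by
  rcases eq_or_ne s 0 with rfl | hs
  · simp
  · rw [card_erase_of_mem (sup_mem_of_ne_zero_s1 hs), Nat.pred_eq_sub_one]

theorem sup_erase_sup_le (s : Multiset ℕ) : (s.erase s.sup).sup ≤ s.sup :=
  sup_mono (erase_subset _ _)

theorem sum_filter_pos (s : Multiset ℕ) : (s.filter (0 < ·)).sum = s.sum := by
  conv_rhs => rw [← filter_add_not (0 < ·) s, sum_add]
  rw [sum_eq_zero fun x hx => Nat.eq_zero_of_not_pos (mem_filter.1 hx).2, add_zero]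

theorem card_le_sum (hs : ∀ x ∈ s, 0 < x) : card s ≤ s.sum := by
  simpa using card_nsmul_le_sum hs

theorem sum_map_pred (hs : ∀ x ∈ s, 0 < x) : (s.map (· - 1)).sum = s.sum - card s := by
  rw [sum_map_tsub _ hs]
  simp

end Multiset

namespace Nat.Partition

open Multiset

variable {m : ℕ}

theorem parts_ne_zero (μ : m.Partition) (hm : m ≠ 0) : μ.parts ≠ 0 := fun h =>
  hm (by rw [← μ.parts_sum, h, Multiset.sum_zero])

theorem ext_of_sup_of_erase_sup {μ ν : m.Partition} (hsup : μ.parts.sup = ν.parts.sup)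
    (herase : μ.parts.erase μ.parts.sup = ν.parts.erase ν.parts.sup) : μ = ν := by
  rcases eq_or_ne m 0 with rfl | hm
  · exact Subsingleton.elim _ _
  · ext1
    rw [← cons_erase_sup (μ.parts_ne_zero hm), ← cons_erase_sup (ν.parts_ne_zero hm), herase,
      hsup]

theorem card_parts_le (μ : m.Partition) : card μ.parts ≤ m :=
  (card_le_sum fun _ => μ.parts_pos).trans_eq μ.parts_sum

theorem card_parts_eq_of_rank_eq_neg_two {μ : m.Partition} (h : rank μ = -2) :
    card μ.parts = μ.parts.sup + 2 := by
  rw [rank] at h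
  omega

theorem sup_add_three_le_card_parts_of_rank_le_neg_three {μ : m.Partition} (h : rank μ ≤ -3) :
    μ.parts.sup + 3 ≤ card μ.parts := by
  rw [rank] at h
  omega

theorem four_le_card_parts_of_rank_le_neg_three {μ : m.Partition} (h : rank μ ≤ -3) :
    4 ≤ card μ.parts := by
  have hsup := colLen_eq_zero_iff (s := μ.parts) (j := 0)
  rw [colLen_zero fun _ => μ.parts_pos] at hsup
  have := sup_add_three_le_card_parts_of_rank_le_neg_three h
  omega

@[simps parts]
def bumpLargest (μ : m.Partition) : (m + 1).Partition where
  parts := (μ.parts.sup + 1) ::ₘ μ.parts.erase μ.parts.sup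
  parts_pos hi := by
    rcases Multiset.mem_cons.1 hi with rfl | hi
    · omega
    · exact μ.parts_pos (mem_of_mem_erase hi)
  parts_sum := by rw [Multiset.sum_cons, add_right_comm, sup_add_sum_erase_sup, μ.parts_sum]

@[simps parts]
def bumpLargestConj (μ : m.Partition) : (m + 1).Partition where
  parts := (μ.parts.sup + 1) ::ₘ (μ.parts.erase μ.parts.sup).conjugate
  parts_pos hi := by
    rcases Multiset.mem_cons.1 hi with rfl | hi
    · omega
    · exact pos_of_mem_conjugate hi
  parts_sum := by
    rw [Multiset.sum_cons, sum_conjugate, add_right_comm, sup_add_sum_erase_sup, μ.parts_sum]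

theorem sup_bumpLargest (μ : m.Partition) : μ.bumpLargest.parts.sup = μ.parts.sup + 1 := by
  rw [bumpLargest_parts, Multiset.sup_cons]
  exact sup_eq_left.2 ((sup_erase_sup_le _).trans (Nat.le_succ _))

theorem count_bumpLargest (μ : m.Partition) :
    μ.bumpLargest.parts.count (μ.parts.sup + 1) = 1 := by
  rw [bumpLargest_parts, count_cons_self, count_eq_zero.2 fun h => ?_]
  have := (le_sup h).trans (sup_erase_sup_le _)
  omega

theorem rank_bumpLargest_nonneg {μ : m.Partition} (h : -1 ≤ rank μ) :
    0 ≤ rank μ.bumpLargest := by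
  rw [rank] at h
  rw [rank, sup_bumpLargest, bumpLargest_parts, Multiset.card_cons, card_erase_sup]
  omega

theorem bumpLargest_injective : Function.Injective (bumpLargest (m := m)) := by
  intro μ ν h
  have hsup : μ.parts.sup = ν.parts.sup := by
    simpa only [sup_bumpLargest, add_left_inj] using congrArg (·.parts.sup) h
  refine ext_of_sup_of_erase_sup hsup ?_
  have hparts := congrArg Nat.Partition.parts h
  rw [bumpLargest_parts, bumpLargest_parts, hsup, cons_inj_right] at hparts
  rwa [hsup]

section RankNegTwo

variable {μ ν : m.Partition}

theorem card_erase_sup_of_rank_eq_neg_two (h : rank μ = -2) :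
    card (μ.parts.erase μ.parts.sup) = μ.parts.sup + 1 := by
  rw [card_erase_sup, card_parts_eq_of_rank_eq_neg_two h]
  rfl

theorem sup_bumpLargestConj (h : rank μ = -2) :
    μ.bumpLargestConj.parts.sup = μ.parts.sup + 1 := by
  rw [bumpLargestConj_parts, Multiset.sup_cons,
    sup_conjugate fun _ hx => μ.parts_pos (mem_of_mem_erase hx),
    card_erase_sup_of_rank_eq_neg_two h, sup_idem]

theorem two_le_count_bumpLargestConj (h : rank μ = -2) :
    2 ≤ μ.bumpLargestConj.parts.count (μ.parts.sup + 1) := by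
  have hmem := card_mem_conjugate (s := μ.parts.erase μ.parts.sup)
    (fun _ hx => μ.parts_pos (mem_of_mem_erase hx))
    (fun h0 => by simpa [h0] using card_erase_sup_of_rank_eq_neg_two h)
  rw [card_erase_sup_of_rank_eq_neg_two h] at hmem
  rw [bumpLargestConj_parts, count_cons_self]
  have := count_pos.2 hmem
  omega

theorem rank_bumpLargestConj_nonneg (h : rank μ = -2) : 0 ≤ rank μ.bumpLargestConj := by
  rw [rank, sup_bumpLargestConj h]
  simp only [bumpLargestConj_parts, Multiset.card_cons, card_conjugate]
  have := sup_erase_sup_le μ.parts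
  omega

theorem bumpLargestConj_inj (hμ : rank μ = -2) (hν : rank ν = -2)
    (h : μ.bumpLargestConj = ν.bumpLargestConj) : μ = ν := by
  have hsup : μ.parts.sup = ν.parts.sup := by
    simpa only [sup_bumpLargestConj hμ, sup_bumpLargestConj hν, add_left_inj] using
      congrArg (·.parts.sup) h
  refine ext_of_sup_of_erase_sup hsup ?_
  have hparts := congrArg Nat.Partition.parts h
  rw [bumpLargestConj_parts, bumpLargestConj_parts, hsup, cons_inj_right,
    conjugate_inj (fun _ hx => μ.parts_pos (mem_of_mem_erase hx))
      (fun _ hx => ν.parts_pos (mem_of_mem_erase hx))] at hparts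
  rwa [hsup]

theorem bumpLargest_ne_bumpLargestConj (hν : rank ν = -2) :
    μ.bumpLargest ≠ ν.bumpLargestConj := by
  intro h
  have hsup : μ.parts.sup = ν.parts.sup := by
    simpa only [sup_bumpLargest, sup_bumpLargestConj hν, add_left_inj] using
      congrArg (·.parts.sup) h
  have hcount := count_bumpLargest μ
  rw [h, hsup] at hcount
  have := two_le_count_bumpLargestConj hν
  omega

end RankNegTwo

def toRankNonneg (μ : m.Partition) : (m + 1).Partition :=
  if rank μ = -2 then μ.bumpLargestConj else μ.bumpLargest

theorem rank_toRankNonneg_nonneg {μ : m.Partition} (h : -2 ≤ rank μ) :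
    0 ≤ rank μ.toRankNonneg := by
  unfold toRankNonneg
  split_ifs with h2
  · exact rank_bumpLargestConj_nonneg h2
  · exact rank_bumpLargest_nonneg (by omega)

theorem toRankNonneg_injective : Function.Injective (toRankNonneg (m := m)) := by
  intro μ ν h
  unfold toRankNonneg at h
  split_ifs at h with hμ hν hν
  · exact bumpLargestConj_inj hμ hν h
  · exact absurd h.symm (bumpLargest_ne_bumpLargestConj hμ)
  · exact absurd h (bumpLargest_ne_bumpLargestConj hν)
  · exact bumpLargest_injective h

/-- `map (· - 1)` strips the first column, of length `k = card μ.parts`, off the Young diagram and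
`filter` discards the parts that become zero; a row of length `k - 4` is added. -/
def firstColumnToRow (μ : (m + 4).Partition) (h : 4 ≤ card μ.parts) : m.Partition where
  parts := ((card μ.parts - 4) ::ₘ μ.parts.map (· - 1)).filter (0 < ·)
  parts_pos hi := (mem_filter.1 hi).2
  parts_sum := by
    have hle := card_parts_le μ
    rw [sum_filter_pos, Multiset.sum_cons, sum_map_pred fun _ => μ.parts_pos, μ.parts_sum]
    omega

theorem colLen_firstColumnToRow (μ : (m + 4).Partition) (h : 4 ≤ card μ.parts) (j : ℕ) :
    (μ.firstColumnToRow h).parts.colLen j =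
      μ.parts.colLen (j + 1) + if j < card μ.parts - 4 then 1 else 0 := by
  have hcol (x : ℕ) : (j < x - 1 ∧ 0 < x - 1) ↔ j + 1 < x := by omega
  have hrow : (j < card μ.parts - 4 ∧ 0 < card μ.parts - 4) ↔ j < card μ.parts - 4 := by
    omega
  rw [firstColumnToRow, colLen, countP_filter, countP_cons, countP_map, colLen,
    countP_eq_card_filter]
  simp only [hcol, hrow]

theorem sup_firstColumnToRow {μ : (m + 4).Partition} (hμ : rank μ ≤ -3) :
    (μ.firstColumnToRow (four_le_card_parts_of_rank_le_neg_three hμ)).parts.sup =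
      card μ.parts - 4 := by
  have hk := sup_add_three_le_card_parts_of_rank_le_neg_three hμ
  refine eq_of_forall_ge_iff fun j => ?_
  rw [← colLen_eq_zero_iff, colLen_firstColumnToRow, Nat.add_eq_zero_iff, colLen_eq_zero_iff,
    ite_eq_right_iff]
  omega

theorem firstColumnToRow_inj {μ ν : (m + 4).Partition} (hμ : rank μ ≤ -3)
    (hν : rank ν ≤ -3)
    (h : μ.firstColumnToRow (four_le_card_parts_of_rank_le_neg_three hμ) =
      ν.firstColumnToRow (four_le_card_parts_of_rank_le_neg_three hν)) : μ = ν := by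
  have hcard : card μ.parts = card ν.parts := by
    have := congrArg (·.parts.sup) h
    simp only [sup_firstColumnToRow hμ, sup_firstColumnToRow hν] at this
    have := four_le_card_parts_of_rank_le_neg_three hμ
    have := four_le_card_parts_of_rank_le_neg_three hν
    omega
  refine Nat.Partition.ext (eq_of_colLen_eq (fun _ => μ.parts_pos) (fun _ => ν.parts_pos)
    (funext fun j => ?_))
  cases j with
  | zero => rw [colLen_zero fun _ => μ.parts_pos, colLen_zero fun _ => ν.parts_pos, hcard]
  | succ j =>
    have := congrArg (·.parts.colLen j) h
    simp only [colLen_firstColumnToRow, hcard] at this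
    omega

end Nat.Partition

open Nat.Partition

theorem p_eq_card_rank_ge_neg_two_add_card_rank_le_neg_three (m : ℕ) :
    p m = Nat.card {μ : m.Partition // -2 ≤ rank μ} +
      Nat.card {μ : m.Partition // rank μ ≤ -3} := by
  rw [p, ← Nat.card_sum]
  exact Nat.card_congr <| (Equiv.sumCompl _).symm.trans <|
    Equiv.sumCongr (Equiv.refl _) (Equiv.subtypeEquivRight fun _ => by omega)

theorem card_rank_ge_neg_two_le_Nrank_succ (m : ℕ) :
    Nat.card {μ : m.Partition // -2 ≤ rank μ} ≤ Nrank (m + 1) :=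
  Nat.card_le_card_of_injective (fun μ => ⟨μ.1.toRankNonneg, rank_toRankNonneg_nonneg μ.2⟩)
    fun _ _ h => Subtype.ext (toRankNonneg_injective (congrArg Subtype.val h))

theorem card_rank_le_neg_three_le_pz (m : ℕ) :
    Nat.card {μ : m.Partition // rank μ ≤ -3} ≤ pz ((m : ℤ) - 4) := by
  rcases Nat.lt_or_ge m 4 with hm | hm
  · have : IsEmpty {μ : m.Partition // rank μ ≤ -3} := ⟨fun μ => by
      have := (four_le_card_parts_of_rank_le_neg_three μ.2).trans (card_parts_le μ.1)
      omega⟩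
    simp
  · obtain ⟨k, rfl⟩ := Nat.exists_eq_add_of_le' hm
    have hpz : pz (((k + 4 : ℕ) : ℤ) - 4) = p k := by simp [pz]
    rw [hpz, p]
    exact Nat.card_le_card_of_injective
      (fun μ => μ.1.firstColumnToRow (four_le_card_parts_of_rank_le_neg_three μ.2))
      fun μ ν h => Subtype.ext (firstColumnToRow_inj μ.2 ν.2 h)

theorem stmt1 (n : ℕ) (hn : 0 < n) :
    (pz ((n : ℤ) - 1) : ℤ) - (pz ((n : ℤ) - 5) : ℤ) ≤ (Nrank n : ℤ) := by
  obtain ⟨m, rfl⟩ := Nat.exists_eq_add_one_of_ne_zero hn.ne'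
  have hsplit := p_eq_card_rank_ge_neg_two_add_card_rank_le_neg_three m
  have hmain := card_rank_ge_neg_two_le_Nrank_succ m
  have htail := card_rank_le_neg_three_le_pz m
  have hpz : pz (((m + 1 : ℕ) : ℤ) - 1) = p m := by simp [pz]
  have h5 : ((m + 1 : ℕ) : ℤ) - 5 = (m : ℤ) - 4 := by push_cast; ring
  rw [hpz, h5]
  omega
end

section
/- For every integer n ≥ 0, p(n) ≥ C(n) and p(n) - p(n-1) ≤ C(n), where C(n) is the number of partitions of n with non-negative crank. -/
open PowerSeries Finset

/-!
A partition without a part equal to `1` has crank equal to its largest part, hence non-negative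
crank. Partitions of `n` containing a `1` correspond to partitions of `n - 1` by removing one `1`.
So `p n` is at most `C n + p (n - 1)`.
-/

lemma crank_nonneg_of_one_notMem {n : ℕ} {P : n.Partition} (h : 1 ∉ P.parts) :
    0 ≤ crank P := by
  rw [crank, if_pos (Multiset.count_eq_zero.mpr h)]
  exact Int.natCast_nonneg _

lemma card_one_mem_parts (n : ℕ) :
    Nat.card {P : n.Partition // 1 ∈ P.parts} = pz ((n : ℤ) - 1) := by
  cases n with
  | zero => simp [pz]
  | succ m =>
    rw [Nat.card_congr (Nat.Partition.partitionWithPartEquiv le_rfl (Nat.le_add_left 1 m))]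
    simp [pz, p]

lemma p_le_Ccrank_add_card_one_mem_parts (n : ℕ) :
    p n ≤ Ccrank n + Nat.card {P : n.Partition // 1 ∈ P.parts} := by
  have hsplit : p n = Nat.card {P : n.Partition // 1 ∉ P.parts}
      + Nat.card {P : n.Partition // 1 ∈ P.parts} := by
    rw [p, ← Nat.card_congr (Equiv.sumCompl fun P : n.Partition => 1 ∉ P.parts), Nat.card_sum]
    simp only [not_not]
  have hfree : Nat.card {P : n.Partition // 1 ∉ P.parts} ≤ Ccrank n :=
    Nat.card_le_card_of_injective (fun P => ⟨P.1, crank_nonneg_of_one_notMem P.2⟩)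
      fun _ _ h => Subtype.ext (Subtype.mk_eq_mk.mp h)
  omega

theorem stmt10 (n : ℕ) :
    Ccrank n ≤ p n ∧ (p n : ℤ) - (pz ((n : ℤ) - 1) : ℤ) ≤ (Ccrank n : ℤ) := by
  refine ⟨Nat.card_le_card_of_injective Subtype.val Subtype.val_injective, ?_⟩
  have := p_le_Ccrank_add_card_one_mem_parts n
  rw [card_one_mem_parts] at this
  omega
end

section
/- As formal power series, (1/(q;q)_∞) Σ_{n=0}^∞ (-1)^n q^{n(n+1)/2} = Σ_{n=0}^∞ q^{n(n+1)} / ((q;q)_n)^2, where (q;q)_n = Π_{i=1}^n (1-q^i). -/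
open PowerSeries Finset

/-
Euler's theorem `(q;q)_∞ / (q;q)_n = (q^{n+1};q)_∞ = ∑_j (-1)^j q^{T_j + nj} / (q;q)_j`,
with `T_j = j(j+1)/2`, follows from the functional equation `F_n = (1 - q^{n+1}) F_{n+1}` of the
right-hand side together with `F_n → 1`. Multiplying the right-hand side of the theorem by
`(q;q)_∞` therefore gives the double sum `∑_{n,j} (-1)^j q^{n(n+1) + T_j + nj} / ((q;q)_n (q;q)_j)`.
Since `n(n+1) + T_j + nj = T_{n+j} + T_n`, the terms with `n + j = m` add up to
`(-1)^m q^{T_m} ∑_{n+j=m} (-1)^n q^{T_n} / ((q;q)_n (q;q)_j)`, and this last sum is `1`: it is the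
`q`-binomial theorem `∑_n (-1)^n q^{n(n-1)/2} [m n]_q z^n = (z;q)_m` at `z = q`.
-/

open Filter Topology

-- The topology on `ℚ⟦X⟧` is that of `PowerSeries.WithPiTopology`, whose instances are scoped.
instance : IsTopologicalRing (PowerSeries ℚ) := PowerSeries.WithPiTopology.instIsTopologicalRing ℚ

instance : T3Space (PowerSeries ℚ) := inferInstanceAs (T3Space ((Unit →₀ ℕ) → ℚ))

theorem Nat.le_mul_add_one_div_two (j : ℕ) : j ≤ j * (j + 1) / 2 := by
  rw [Nat.le_div_iff_mul_le two_pos]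
  rcases j with _ | j
  · rfl
  · exact Nat.mul_le_mul_left _ (by omega)

theorem Nat.add_mul_add_add_one_div_two (n j : ℕ) :
    (n + j) * (n + j + 1) / 2 = n * (n + 1) / 2 + j * (j + 1) / 2 + n * j := by
  obtain ⟨a, ha⟩ := Nat.even_mul_succ_self n
  obtain ⟨b, hb⟩ := Nat.even_mul_succ_self j
  have : (n + j) * (n + j + 1) = 2 * (a + b + n * j) := by nlinarith
  rw [this, ha, hb]
  omega

theorem tsum_prod_eq_tsum_sum_antidiagonal {α A : Type*} [AddCommMonoid α] [TopologicalSpace α]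
    [ContinuousAdd α] [T3Space α] [AddCommMonoid A] [Finset.HasAntidiagonal A] {f : A × A → α}
    (hf : Summable f) (hfib : ∀ n, Summable fun j ↦ f (n, j)) :
    ∑' n, ∑' j, f (n, j) = ∑' m, ∑ p ∈ antidiagonal m, f p := by
  rw [← hf.tsum_prod' hfib, ← Finset.HasAntidiagonal.sigmaAntidiagonalEquivProd.tsum_eq f]
  exact ((Finset.HasAntidiagonal.sigmaAntidiagonalEquivProd.summable_iff.2 hf).tsum_sigma'
    fun m ↦ (hasSum_fintype _).summable).trans
      (tsum_congr fun m ↦ Finset.tsum_subtype (antidiagonal m) f)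

namespace PowerSeries.WithPiTopology

open scoped PowerSeries.WithPiTopology

variable {R ι : Type*} [Semiring R] [TopologicalSpace R]

theorem summable_X_pow_mul {e : ι → ℕ} (he : Tendsto e cofinite atTop) (c : ι → R⟦X⟧) :
    Summable fun i ↦ X ^ e i * c i := by
  refine (summable_iff_summable_coeff R).2 fun d ↦ summable_of_hasFiniteSupport ?_
  refine (eventually_cofinite.1 (he.eventually (eventually_gt_atTop d))).subset
    fun i hi ↦ by_contra fun hlt ↦ hi ?_
  exact (coeff_X_pow_mul' _ _ _).trans (if_neg (by simpa using hlt))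

end PowerSeries.WithPiTopology

open PowerSeries.WithPiTopology

theorem constantCoeff_qPoch (n : ℕ) : constantCoeff (qPoch n) = 1 := by
  simp [qPoch, map_prod]

theorem qPoch_succ (n : ℕ) : qPoch (n + 1) = qPoch n * (1 - X ^ (n + 1)) :=
  prod_range_succ _ n

theorem inv_qPoch_succ_mul (n : ℕ) : (qPoch (n + 1))⁻¹ * (1 - X ^ (n + 1)) = (qPoch n)⁻¹ := by
  rw [qPoch_succ, PowerSeries.mul_inv_rev, mul_right_comm, PowerSeries.inv_mul_cancel _ (by simp),
    one_mul]

theorem inv_qPoch_sq (n : ℕ) : ((qPoch n) ^ 2)⁻¹ = (qPoch n)⁻¹ * (qPoch n)⁻¹ := by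
  rw [sq, PowerSeries.mul_inv_rev]

theorem sum_antidiagonal_neg_one_pow_mul_X_pow_mul_inv_qPoch (m : ℕ) :
    ∑ p ∈ antidiagonal m,
      (-1) ^ p.1 * X ^ (p.1 * (p.1 + 1) / 2) * ((qPoch p.1)⁻¹ * (qPoch p.2)⁻¹) = (1 : ℚ⟦X⟧) := by
  induction m with
  | zero => simp [qPoch]
  | succ m ih =>
    set t : ℕ × ℕ → ℚ⟦X⟧ :=
      fun p ↦ (-1) ^ p.1 * X ^ (p.1 * (p.1 + 1) / 2) * ((qPoch p.1)⁻¹ * (qPoch p.2)⁻¹)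
    -- `1 - q^{n+j} = (1 - q^j) + q^j (1 - q^n)` splits the sum into two shifted copies of the
    -- previous one.
    have hsplit : (1 - X ^ (m + 1)) * ∑ p ∈ antidiagonal (m + 1), t p =
        ∑ p ∈ antidiagonal (m + 1), t p * (1 - X ^ p.2) +
          ∑ p ∈ antidiagonal (m + 1), t p * (X ^ p.2 * (1 - X ^ p.1)) := by
      rw [mul_sum, ← sum_add_distrib]
      refine sum_congr rfl fun p hp ↦ ?_
      rw [← mem_antidiagonal.1 hp, pow_add]
      ring
    have h₁ : ∑ p ∈ antidiagonal (m + 1), t p * (1 - X ^ p.2) = ∑ p ∈ antidiagonal m, t p := by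
      rw [Nat.sum_antidiagonal_succ', pow_zero, sub_self, mul_zero, zero_add]
      refine sum_congr rfl fun p _ ↦ ?_
      simp only [t, mul_assoc, inv_qPoch_succ_mul]
    have h₂ : ∑ p ∈ antidiagonal (m + 1), t p * (X ^ p.2 * (1 - X ^ p.1)) =
        -(X ^ (m + 1) * ∑ p ∈ antidiagonal m, t p) := by
      rw [Nat.sum_antidiagonal_succ, pow_zero, sub_self, mul_zero, mul_zero, zero_add, mul_sum,
        ← sum_neg_distrib]
      refine sum_congr rfl fun p hp ↦ ?_
      have hexp : (p.1 + 1) * (p.1 + 1 + 1) / 2 = p.1 * (p.1 + 1) / 2 + (p.1 + 1) := by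
        rw [Nat.add_mul_add_add_one_div_two]
        ring
      rw [← mem_antidiagonal.1 hp]
      simp only [t, hexp, pow_add, pow_succ]
      linear_combination -(-1) ^ p.1 * X ^ (p.1 * (p.1 + 1) / 2) * X ^ p.2 * X ^ p.1 * X *
        (qPoch p.2)⁻¹ * inv_qPoch_succ_mul p.1
    have hne : (1 - X ^ (m + 1) : ℚ⟦X⟧) ≠ 0 := fun h ↦ by simpa using congrArg constantCoeff h
    refine mul_left_cancel₀ hne ?_
    rw [hsplit, h₁, h₂, ih]
    ring

noncomputable def eulerTerm (n j : ℕ) : ℚ⟦X⟧ :=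
  X ^ (j * (j + 1) / 2 + n * j) * ((-1) ^ j * (qPoch j)⁻¹)

/-- Euler's expansion of `(q^{n+1};q)_∞`. -/
noncomputable def eulerSum (n : ℕ) : ℚ⟦X⟧ := ∑' j, eulerTerm n j

theorem summable_eulerTerm (n : ℕ) : Summable (eulerTerm n) :=
  summable_X_pow_mul (tendsto_atTop_mono (fun j ↦ (Nat.le_mul_add_one_div_two j).trans le_self_add)
    (Nat.cofinite_eq_atTop ▸ tendsto_id)) _

theorem eulerTerm_zero (n : ℕ) : eulerTerm n 0 = 1 := by
  simp [eulerTerm, qPoch]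

theorem eulerTerm_succ_sub_eulerTerm_succ (n j : ℕ) :
    eulerTerm n (j + 1) - eulerTerm (n + 1) (j + 1) = -(X ^ (n + 1) * eulerTerm (n + 1) j) := by
  have hexp : (j + 1) * (j + 1 + 1) / 2 = j * (j + 1) / 2 + (j + 1) := by
    rw [Nat.add_mul_add_add_one_div_two]
    ring
  rw [eulerTerm, eulerTerm, eulerTerm, hexp]
  generalize j * (j + 1) / 2 = T
  simp only [mul_add_one, add_one_mul, pow_add, pow_succ]
  linear_combination -(-1) ^ j * X ^ T * X ^ j * X * X ^ (n * j) * X ^ n *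
    inv_qPoch_succ_mul j

theorem eulerSum_eq_one_sub_X_pow_mul (n : ℕ) :
    eulerSum n = (1 - X ^ (n + 1)) * eulerSum (n + 1) := by
  have h := (summable_eulerTerm n).tsum_sub (summable_eulerTerm (n + 1))
  rw [((summable_eulerTerm n).sub (summable_eulerTerm (n + 1))).tsum_eq_zero_add] at h
  simp only [eulerTerm_zero, sub_self, zero_add, eulerTerm_succ_sub_eulerTerm_succ, tsum_neg,
    (summable_eulerTerm (n + 1)).tsum_mul_left] at h
  unfold eulerSum
  linear_combination -h

theorem qPoch_mul_eulerSum_of_le {n m : ℕ} (h : n ≤ m) :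
    qPoch m * eulerSum m = qPoch n * eulerSum n := by
  induction m, h using Nat.le_induction with
  | base => rfl
  | succ m _ ih => rw [← ih, qPoch_succ, eulerSum_eq_one_sub_X_pow_mul m, mul_assoc]

theorem tendsto_eulerSum : Tendsto eulerSum atTop (𝓝 1) := by
  refine (tendsto_iff_coeff_tendsto ℚ _ _ _).2 fun d ↦ tendsto_const_nhds.congr' ?_
  filter_upwards [eventually_ge_atTop d] with m hm
  rw [eulerSum, (summable_eulerTerm m).map_tsum _ (continuous_coeff ℚ d),
    tsum_eq_single 0 fun j hj ↦ ?_, eulerTerm_zero]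
  have := Nat.le_mul_add_one_div_two j
  have := Nat.le_mul_of_pos_right m (Nat.pos_of_ne_zero hj)
  rw [eulerTerm, coeff_X_pow_mul', if_neg (by omega)]

theorem tendsto_qPoch : Tendsto qPoch atTop (𝓝 E) :=
  (multipliable_one_sub_X_pow ℚ).hasProd.tendsto_prod_nat

theorem qPoch_mul_eulerSum (n : ℕ) : qPoch n * eulerSum n = E := by
  refine tendsto_nhds_unique (tendsto_const_nhds.congr' ?_)
    (by simpa using tendsto_qPoch.mul tendsto_eulerSum)
  filter_upwards [eventually_ge_atTop n] with m hm
  exact (qPoch_mul_eulerSum_of_le hm).symm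

theorem constantCoeff_E : constantCoeff E = 1 :=
  tendsto_nhds_unique (((continuous_constantCoeff ℚ).tendsto E).comp tendsto_qPoch)
    (by simp [Function.comp_def, constantCoeff_qPoch])

noncomputable def doubleSumTerm (p : ℕ × ℕ) : ℚ⟦X⟧ :=
  X ^ (p.1 * (p.1 + 1) + (p.2 * (p.2 + 1) / 2 + p.1 * p.2)) *
    ((-1) ^ p.2 * ((qPoch p.1)⁻¹ * (qPoch p.2)⁻¹))

theorem summable_doubleSumTerm : Summable doubleSumTerm := by
  refine summable_X_pow_mul (tendsto_atTop.2 fun d ↦ eventually_cofinite.2 <|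
    ((Set.finite_Iic d).prod (Set.finite_Iic d)).subset fun p hp ↦ ?_) _
  have := Nat.le_mul_add_one_div_two p.2
  have := Nat.le_mul_of_pos_right p.1 (by omega : 0 < p.1 + 1)
  simp only [Set.mem_ofPred_eq, not_le, Set.mem_prod, Set.mem_Iic] at hp ⊢
  omega

theorem doubleSumTerm_eq_mul_eulerTerm (n j : ℕ) :
    doubleSumTerm (n, j) = X ^ (n * (n + 1)) * (qPoch n)⁻¹ * eulerTerm n j := by
  rw [doubleSumTerm, eulerTerm, pow_add]
  ring

theorem summable_doubleSumTerm_fiber (n : ℕ) : Summable fun j ↦ doubleSumTerm (n, j) :=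
  ((summable_eulerTerm n).mul_left _).congr fun j ↦ (doubleSumTerm_eq_mul_eulerTerm n j).symm

theorem tsum_doubleSumTerm_fiber (n : ℕ) :
    ∑' j, doubleSumTerm (n, j) = E * (X ^ (n * (n + 1)) * ((qPoch n) ^ 2)⁻¹) :=
  calc ∑' j, doubleSumTerm (n, j)
      = ∑' j, X ^ (n * (n + 1)) * (qPoch n)⁻¹ * eulerTerm n j :=
        tsum_congr (doubleSumTerm_eq_mul_eulerTerm n)
    _ = X ^ (n * (n + 1)) * (qPoch n)⁻¹ * eulerSum n := (summable_eulerTerm n).tsum_mul_left _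
    _ = E * (X ^ (n * (n + 1)) * ((qPoch n) ^ 2)⁻¹) := by
        rw [← qPoch_mul_eulerSum n, inv_qPoch_sq]
        linear_combination -(X ^ (n * (n + 1)) * (qPoch n)⁻¹ * eulerSum n) *
          PowerSeries.mul_inv_cancel _ (by simp [constantCoeff_qPoch] : constantCoeff (qPoch n) ≠ 0)

theorem doubleSumTerm_eq_X_pow_triangle_mul (n j : ℕ) :
    doubleSumTerm (n, j) = (-1) ^ (n + j) * X ^ ((n + j) * (n + j + 1) / 2) *
      ((-1) ^ n * X ^ (n * (n + 1) / 2) * ((qPoch n)⁻¹ * (qPoch j)⁻¹)) := by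
  have hexp : n * (n + 1) + (j * (j + 1) / 2 + n * j) =
      (n + j) * (n + j + 1) / 2 + n * (n + 1) / 2 := by
    have := Nat.two_mul_div_two_of_even (Nat.even_mul_succ_self n)
    rw [Nat.add_mul_add_add_one_div_two]
    omega
  have hsign : ((-1) ^ n * (-1) ^ n : ℚ⟦X⟧) = 1 := by rw [← mul_pow]; simp
  rw [doubleSumTerm]
  dsimp only
  rw [hexp, pow_add, pow_add]
  linear_combination -(-1) ^ j * X ^ ((n + j) * (n + j + 1) / 2) * X ^ (n * (n + 1) / 2) *
    (qPoch n)⁻¹ * (qPoch j)⁻¹ * hsign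

theorem sum_antidiagonal_doubleSumTerm (m : ℕ) :
    ∑ p ∈ antidiagonal m, doubleSumTerm p = (-1) ^ m * X ^ (m * (m + 1) / 2) :=
  calc ∑ p ∈ antidiagonal m, doubleSumTerm p
      = ∑ p ∈ antidiagonal m, (-1) ^ m * X ^ (m * (m + 1) / 2) *
          ((-1) ^ p.1 * X ^ (p.1 * (p.1 + 1) / 2) * ((qPoch p.1)⁻¹ * (qPoch p.2)⁻¹)) :=
        sum_congr rfl fun p hp ↦ by
          rw [← mem_antidiagonal.1 hp, ← doubleSumTerm_eq_X_pow_triangle_mul]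
    _ = (-1) ^ m * X ^ (m * (m + 1) / 2) := by
        rw [← mul_sum, sum_antidiagonal_neg_one_pow_mul_X_pow_mul_inv_qPoch, mul_one]

theorem E_mul_tsum_X_pow_mul_inv_qPoch_sq :
    E * ∑' n : ℕ, X ^ (n * (n + 1)) * ((qPoch n) ^ 2)⁻¹ =
      ∑' n : ℕ, ((-1 : ℚ) ^ n) • (X : ℚ⟦X⟧) ^ (n * (n + 1) / 2) := by
  have hS : Summable fun n : ℕ ↦ (X : ℚ⟦X⟧) ^ (n * (n + 1)) * ((qPoch n) ^ 2)⁻¹ :=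
    summable_X_pow_mul (tendsto_atTop_mono (fun n ↦ Nat.le_mul_of_pos_right n n.succ_pos)
      (Nat.cofinite_eq_atTop ▸ tendsto_id)) _
  rw [← hS.tsum_mul_left]
  simp_rw [← tsum_doubleSumTerm_fiber, tsum_prod_eq_tsum_sum_antidiagonal summable_doubleSumTerm
    summable_doubleSumTerm_fiber, sum_antidiagonal_doubleSumTerm, smul_eq_C_mul, map_pow,
    map_neg, map_one]

theorem stmt11 :
    E⁻¹ * (∑' n : ℕ, ((-1 : ℚ) ^ n) • (X : PowerSeries ℚ) ^ (n * (n + 1) / 2)) =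
      ∑' n : ℕ, (X : PowerSeries ℚ) ^ (n * (n + 1)) * ((qPoch n) ^ 2)⁻¹ := by
  rw [← E_mul_tsum_X_pow_mul_inv_qPoch_sq, ← mul_assoc,
    PowerSeries.inv_mul_cancel _ (by simp [constantCoeff_E]), one_mul]
end
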